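/- arXiv:2211.01083 — 2 statements merged into one kernel-verified Lean document; each statement's English description precedes it below -/
import Mathlib

section
/- For the Maker-Maker scoring positional game on a finite hypergraph H, the optimal relative score with Left moving first satisfies 0 ≤ Ls(H) ≤ Δ(H), where Δ(H) is the maximum, over vertices v, of the number of hyperedges containing v. Moreover Rs(H) = −Ls(H). -/
/-- Minimax value of a scoring positional game: players alternately claim
unclaimed vertices (`turn = true` means Left/Maker to move); when all vertices
are claimed the value is given by `score VL VR`. Left maximizes, Right minimizes. -/
noncomputable def gameValue {V : Type} [Fintype V] [DecidableEq V]
    (score : Finset V → Finset V → ℤ) :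
    Bool → Finset V → Finset V → ℤ := fun turn VL VR =>
  if h : (VL ∪ VR)ᶜ = (∅ : Finset V) then score VL VR
  else
    have hne : ((VL ∪ VR)ᶜ).attach.Nonempty :=
      Finset.attach_nonempty_iff.mpr (Finset.nonempty_iff_ne_empty.mpr h)
    if turn then
      ((VL ∪ VR)ᶜ).attach.sup' hne (fun v => gameValue score false (insert v.1 VL) VR)
    else
      ((VL ∪ VR)ᶜ).attach.inf' hne (fun v => gameValue score true VL (insert v.1 VR))
termination_by turn VL VR => ((VL ∪ VR)ᶜ).card
decreasing_by
  · rw [Finset.insert_union, Finset.compl_insert]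
    exact Finset.card_erase_lt_of_mem v.2
  · rw [Finset.union_insert, Finset.compl_insert]
    exact Finset.card_erase_lt_of_mem v.2

/-- Maker-Breaker Incidence final score: number of edges of `G` both of whose
endpoints belong to Left's (Maker's) set. -/
noncomputable def mbScore {V : Type} [Fintype V] [DecidableEq V]
    (G : SimpleGraph V) (VL : Finset V) (_ : Finset V) : ℤ :=
  ({e ∈ G.edgeSet | ∀ w ∈ e, w ∈ VL} : Set (Sym2 V)).ncard

/-- Maker-Maker Incidence final score: Left's edges minus Right's edges. -/
noncomputable def mmScore {V : Type} [Fintype V] [DecidableEq V]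
    (G : SimpleGraph V) (VL VR : Finset V) : ℤ :=
  (({e ∈ G.edgeSet | ∀ w ∈ e, w ∈ VL} : Set (Sym2 V)).ncard : ℤ)
    - (({e ∈ G.edgeSet | ∀ w ∈ e, w ∈ VR} : Set (Sym2 V)).ncard : ℤ)

noncomputable def LsMB {V : Type} [Fintype V] [DecidableEq V] (G : SimpleGraph V) : ℤ :=
  gameValue (mbScore G) true ∅ ∅

noncomputable def RsMB {V : Type} [Fintype V] [DecidableEq V] (G : SimpleGraph V) : ℤ :=
  gameValue (mbScore G) false ∅ ∅

noncomputable def LsMM {V : Type} [Fintype V] [DecidableEq V] (G : SimpleGraph V) : ℤ :=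
  gameValue (mmScore G) true ∅ ∅

noncomputable def RsMM {V : Type} [Fintype V] [DecidableEq V] (G : SimpleGraph V) : ℤ :=
  gameValue (mmScore G) false ∅ ∅

/-- Maker-Breaker final score on a hypergraph with edge set `E`. -/
def mbScoreH {V : Type} [Fintype V] [DecidableEq V]
    (E : Finset (Finset V)) (VL : Finset V) (_ : Finset V) : ℤ :=
  ((E.filter (fun e => e ⊆ VL)).card : ℤ)

/-- Maker-Maker final score on a hypergraph with edge set `E`. -/
def mmScoreH {V : Type} [Fintype V] [DecidableEq V]
    (E : Finset (Finset V)) (VL VR : Finset V) : ℤ :=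
  ((E.filter (fun e => e ⊆ VL)).card : ℤ) - ((E.filter (fun e => e ⊆ VR)).card : ℤ)

/-! Swapping the two players negates the score, which gives `Rs = -Ls`. Claiming a vertex
never hurts its owner, so an extra vertex never hurts either, and moving first is worth
at least as much as moving second: `Rs ≤ Ls`, hence `Ls ≥ 0`. For the upper bound let Left
open at `v`. Deleting the `deg v` edges through `v` lowers every final score by at most
`deg v`, and in the remaining hypergraph `v` is irrelevant, so the position is the
symmetric game with Right to move, worth `≤ 0` by the first two facts. -/

open Finset

namespace Finset

theorem sup'_attach {α β : Type*} [SemilatticeSup α] (s : Finset β) (f : β → α)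
    (h : s.attach.Nonempty) :
    s.attach.sup' h (fun x => f x) = s.sup' (attach_nonempty_iff.mp h) f :=
  le_antisymm (sup'_le _ _ fun x _ => le_sup' f x.2)
    (sup'_le _ _ fun x hx => le_sup' (fun y : s => f y) (mem_attach s ⟨x, hx⟩))

theorem inf'_attach {α β : Type*} [SemilatticeInf α] (s : Finset β) (f : β → α)
    (h : s.attach.Nonempty) :
    s.attach.inf' h (fun x => f x) = s.inf' (attach_nonempty_iff.mp h) f :=
  le_antisymm (le_inf' _ _ fun x hx => inf'_le (fun y : s => f y) (mem_attach s ⟨x, hx⟩))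
    (le_inf' _ _ fun x _ => inf'_le f x.2)

theorem neg_sup' {α β : Type*} [AddCommGroup α] [LinearOrder α] [IsOrderedAddMonoid α]
    {s : Finset β} (h : s.Nonempty) (f : β → α) :
    -s.sup' h f = s.inf' h fun x => -f x :=
  map_finset_sup' (OrderIso.neg α) h f

theorem neg_inf' {α β : Type*} [AddCommGroup α] [LinearOrder α] [IsOrderedAddMonoid α]
    {s : Finset β} (h : s.Nonempty) (f : β → α) :
    -s.inf' h f = s.sup' h fun x => -f x :=
  map_finset_inf' (OrderIso.neg α) h f

theorem compl_insert_union {α : Type*} [Fintype α] [DecidableEq α] (v : α)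
    (A B : Finset α) : (insert v A ∪ B)ᶜ = (A ∪ B)ᶜ.erase v := by
  rw [insert_union, compl_insert]

theorem compl_union_insert {α : Type*} [Fintype α] [DecidableEq α] (v : α)
    (A B : Finset α) : (A ∪ insert v B)ᶜ = (A ∪ B)ᶜ.erase v := by
  rw [union_insert, compl_insert]

end Finset

section Game

variable {V : Type} [Fintype V] [DecidableEq V]

@[elab_as_elim]
theorem position_induction {P : Finset V → Finset V → Prop}
    (step : ∀ VL VR,
      (∀ w ∈ (VL ∪ VR)ᶜ, P (insert w VL) VR ∧ P VL (insert w VR)) → P VL VR)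
    (VL VR : Finset V) : P VL VR := by
  induction hn : #(VL ∪ VR)ᶜ using Nat.strong_induction_on generalizing VL VR with
  | _ n ih =>
  refine step VL VR fun w hw => ⟨ih _ ?_ _ _ rfl, ih _ ?_ _ _ rfl⟩
  · rw [← hn, compl_insert_union]
    exact card_erase_lt_of_mem hw
  · rw [← hn, compl_union_insert]
    exact card_erase_lt_of_mem hw

variable (score : Finset V → Finset V → ℤ) {VL VR : Finset V}

theorem gameValue_of_compl_eq_empty {t : Bool} (h : (VL ∪ VR)ᶜ = ∅) :
    gameValue score t VL VR = score VL VR := by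
  rw [gameValue, dif_pos h]

theorem gameValue_true_of_nonempty (h : (VL ∪ VR)ᶜ.Nonempty) :
    gameValue score true VL VR =
      (VL ∪ VR)ᶜ.sup' h fun w => gameValue score false (insert w VL) VR := by
  rw [gameValue, dif_neg h.ne_empty, if_pos rfl]
  exact sup'_attach _ (fun w => gameValue score false (insert w VL) VR) _

theorem gameValue_false_of_nonempty (h : (VL ∪ VR)ᶜ.Nonempty) :
    gameValue score false VL VR =
      (VL ∪ VR)ᶜ.inf' h fun w => gameValue score true VL (insert w VR) := by
  rw [gameValue, dif_neg h.ne_empty, if_neg Bool.false_ne_true]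
  exact inf'_attach _ (fun w => gameValue score true VL (insert w VR)) _

theorem gameValue_true_le_iff (h : (VL ∪ VR)ᶜ.Nonempty) {c : ℤ} :
    gameValue score true VL VR ≤ c ↔
      ∀ w ∈ (VL ∪ VR)ᶜ, gameValue score false (insert w VL) VR ≤ c := by
  rw [gameValue_true_of_nonempty score h, sup'_le_iff]

theorem le_gameValue_false_iff (h : (VL ∪ VR)ᶜ.Nonempty) {c : ℤ} :
    c ≤ gameValue score false VL VR ↔
      ∀ w ∈ (VL ∪ VR)ᶜ, c ≤ gameValue score true VL (insert w VR) := by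
  rw [gameValue_false_of_nonempty score h, le_inf'_iff]

theorem gameValue_false_insert_le_true {w : V} (hw : w ∈ (VL ∪ VR)ᶜ) :
    gameValue score false (insert w VL) VR ≤ gameValue score true VL VR :=
  (gameValue_true_le_iff score ⟨w, hw⟩).mp le_rfl w hw

theorem gameValue_false_le_true_insert {w : V} (hw : w ∈ (VL ∪ VR)ᶜ) :
    gameValue score false VL VR ≤ gameValue score true VL (insert w VR) :=
  (le_gameValue_false_iff score ⟨w, hw⟩).mp le_rfl w hw

theorem gameValue_swap (hs : ∀ A B, score A B = -score B A) (t : Bool) (VL VR : Finset V) :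
    gameValue score t VL VR = -gameValue score (!t) VR VL := by
  induction VL, VR using position_induction generalizing t with
  | step VL VR ih =>
  have hfree : (VR ∪ VL)ᶜ = (VL ∪ VR)ᶜ := by rw [union_comm]
  rcases (VL ∪ VR)ᶜ.eq_empty_or_nonempty with h | h
  · rw [gameValue_of_compl_eq_empty score h, gameValue_of_compl_eq_empty score (hfree ▸ h)]
    exact hs VL VR
  · cases t
    · rw [gameValue_false_of_nonempty score h, Bool.not_false,
        gameValue_true_of_nonempty score (hfree ▸ h), neg_sup']
      exact inf'_congr h hfree.symm fun w hw => (ih w (hfree ▸ hw)).2 true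
    · rw [gameValue_true_of_nonempty score h, Bool.not_true,
        gameValue_false_of_nonempty score (hfree ▸ h), neg_inf']
      exact sup'_congr h hfree.symm fun w hw => (ih w (hfree ▸ hw)).1 false

theorem gameValue_insert_left_eq_insert_right {v : V}
    (hv : ∀ A B, score (insert v A) B = score A (insert v B)) (t : Bool) (VL VR : Finset V) :
    gameValue score t (insert v VL) VR = gameValue score t VL (insert v VR) := by
  induction VL, VR using position_induction generalizing t with
  | step VL VR ih =>
  have hfree : (VL ∪ insert v VR)ᶜ = (insert v VL ∪ VR)ᶜ := by
    rw [union_insert, insert_union]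
  have hsub : ∀ w ∈ (insert v VL ∪ VR)ᶜ, w ∈ (VL ∪ VR)ᶜ := fun w hw => by
    rw [compl_insert_union] at hw
    exact mem_of_mem_erase hw
  rcases (insert v VL ∪ VR)ᶜ.eq_empty_or_nonempty with h | h
  · rw [gameValue_of_compl_eq_empty score h, gameValue_of_compl_eq_empty score (hfree ▸ h)]
    exact hv VL VR
  · cases t
    · rw [gameValue_false_of_nonempty score h, gameValue_false_of_nonempty score (hfree ▸ h)]
      refine inf'_congr h hfree.symm fun w hw => ?_
      rw [(ih w (hsub w hw)).2 true, insert_comm]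
    · rw [gameValue_true_of_nonempty score h, gameValue_true_of_nonempty score (hfree ▸ h)]
      refine sup'_congr h hfree.symm fun w hw => ?_
      rw [insert_comm, (ih w (hsub w hw)).1 false]

theorem gameValue_le_gameValue_add {score₁ score₂ : Finset V → Finset V → ℤ} {c : ℤ}
    (h : ∀ A B, score₁ A B ≤ score₂ A B + c) (t : Bool) (VL VR : Finset V) :
    gameValue score₁ t VL VR ≤ gameValue score₂ t VL VR + c := by
  induction VL, VR using position_induction generalizing t with
  | step VL VR ih =>
  rcases (VL ∪ VR)ᶜ.eq_empty_or_nonempty with h0 | hn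
  · rw [gameValue_of_compl_eq_empty score₁ h0, gameValue_of_compl_eq_empty score₂ h0]
    exact h VL VR
  · cases t
    · suffices gameValue score₁ false VL VR - c ≤ gameValue score₂ false VL VR by linarith
      refine (le_gameValue_false_iff score₂ hn).mpr fun w hw => ?_
      have hmove := gameValue_false_le_true_insert score₁ hw
      have hnext := (ih w hw).2 true
      linarith
    · refine (gameValue_true_le_iff score₁ hn).mpr fun w hw => ?_
      have hmove := gameValue_false_insert_le_true score₂ hw
      have hnext := (ih w hw).1 false
      linarith

theorem gameValue_false_le_true_of_le_insert
    (h : ∀ u ∈ (VL ∪ VR)ᶜ,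
      gameValue score false VL VR ≤ gameValue score false (insert u VL) VR) :
    gameValue score false VL VR ≤ gameValue score true VL VR := by
  rcases (VL ∪ VR)ᶜ.eq_empty_or_nonempty with h0 | ⟨u, hu⟩
  · rw [gameValue_of_compl_eq_empty score h0, gameValue_of_compl_eq_empty score h0]
  · exact (h u hu).trans (gameValue_false_insert_le_true score hu)

theorem gameValue_le_gameValue_insert
    (hswap : ∀ A B w, score A (insert w B) ≤ score (insert w A) B)
    (t : Bool) {v : V} (hv : v ∈ (VL ∪ VR)ᶜ) :
    gameValue score t VL VR ≤ gameValue score t (insert v VL) VR := by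
  induction VL, VR using position_induction generalizing t v with
  | step VL VR ih =>
  cases t
  · rcases (insert v VL ∪ VR)ᶜ.eq_empty_or_nonempty with h | h
    · have hlast : (VL ∪ insert v VR)ᶜ = ∅ := by
        rwa [compl_union_insert, ← compl_insert_union]
      calc gameValue score false VL VR
          ≤ gameValue score true VL (insert v VR) := gameValue_false_le_true_insert score hv
        _ = score VL (insert v VR) := gameValue_of_compl_eq_empty score hlast
        _ ≤ score (insert v VL) VR := hswap VL VR v
        _ = gameValue score false (insert v VL) VR := (gameValue_of_compl_eq_empty score h).symm
    · refine (le_gameValue_false_iff score h).mpr fun w hw => ?_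
      rw [compl_insert_union, mem_erase] at hw
      calc gameValue score false VL VR
          ≤ gameValue score true VL (insert w VR) := gameValue_false_le_true_insert score hw.2
        _ ≤ gameValue score true (insert v VL) (insert w VR) :=
            (ih w hw.2).2 true (by rw [compl_union_insert]; exact mem_erase.mpr ⟨hw.1.symm, hv⟩)
  · refine (gameValue_true_le_iff score ⟨v, hv⟩).mpr fun w hw => ?_
    obtain rfl | hwv := eq_or_ne w v
    -- Left taking the extra vertex itself leaves Left a tempo ahead.
    · exact gameValue_false_le_true_of_le_insert score fun u hu => (ih w hw).1 false hu
    · calc gameValue score false (insert w VL) VR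
          ≤ gameValue score false (insert v (insert w VL)) VR :=
            (ih w hw).1 false (by rw [compl_insert_union]; exact mem_erase.mpr ⟨hwv.symm, hv⟩)
        _ = gameValue score false (insert w (insert v VL)) VR := by rw [insert_comm]
        _ ≤ gameValue score true (insert v VL) VR :=
            gameValue_false_insert_le_true score
              (by rw [compl_insert_union]; exact mem_erase.mpr ⟨hwv, hw⟩)

theorem gameValue_false_le_true
    (hswap : ∀ A B w, score A (insert w B) ≤ score (insert w A) B) (VL VR : Finset V) :
    gameValue score false VL VR ≤ gameValue score true VL VR :=
  gameValue_false_le_true_of_le_insert score fun _ hu =>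
    gameValue_le_gameValue_insert score hswap false hu

theorem gameValue_false_singleton_nonpos (hs : ∀ A B, score A B = -score B A)
    (hswap : ∀ A B w, score A (insert w B) ≤ score (insert w A) B) {v : V}
    (hv : ∀ A B, score (insert v A) B = score A (insert v B)) :
    gameValue score false {v} ∅ ≤ 0 := by
  have hneg : gameValue score false {v} ∅ = -gameValue score true ∅ {v} :=
    gameValue_swap score hs false {v} ∅
  have hirr : gameValue score true {v} ∅ = gameValue score true ∅ {v} := by
    simpa only [insert_empty] using gameValue_insert_left_eq_insert_right score hv true ∅ ∅
  have hturn := gameValue_false_le_true score hswap {v} ∅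
  linarith

end Game

section MakerMaker

variable {V : Type} [Fintype V] [DecidableEq V] (E : Finset (Finset V))

theorem mmScoreH_swap (A B : Finset V) : mmScoreH E A B = -mmScoreH E B A :=
  (neg_sub _ _).symm

theorem mmScoreH_mono {A A' B B' : Finset V} (hA : A ⊆ A') (hB : B' ⊆ B) :
    mmScoreH E A B ≤ mmScoreH E A' B' := by
  have hL := card_le_card (monotone_filter_right E fun e _ (he : e ⊆ A) => he.trans hA)
  have hR := card_le_card (monotone_filter_right E fun e _ (he : e ⊆ B') => he.trans hB)
  unfold mmScoreH
  omega

theorem mmScoreH_le_insert (A B : Finset V) (w : V) :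
    mmScoreH E A (insert w B) ≤ mmScoreH E (insert w A) B :=
  mmScoreH_mono E (subset_insert w A) (subset_insert w B)

theorem mmScoreH_insert_left_eq_insert_right {v : V} (hv : ∀ e ∈ E, v ∉ e) (A B : Finset V) :
    mmScoreH E (insert v A) B = mmScoreH E A (insert v B) := by
  have hfilter (C : Finset V) : E.filter (· ⊆ insert v C) = E.filter (· ⊆ C) :=
    filter_congr fun e he => subset_insert_iff_of_notMem (hv e he)
  simp only [mmScoreH, hfilter]

theorem mmScoreH_le_add_card_sdiff {F : Finset (Finset V)} (hF : F ⊆ E) (A B : Finset V) :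
    mmScoreH E A B ≤ mmScoreH F A B + #(E \ F) := by
  have hL : #(E.filter (· ⊆ A)) ≤ #(F.filter (· ⊆ A)) + #(E \ F) := by
    refine (card_le_card fun e => ?_).trans (card_union_le _ _)
    simp only [mem_filter, mem_union, mem_sdiff]
    tauto
  have hR : #(F.filter (· ⊆ B)) ≤ #(E.filter (· ⊆ B)) :=
    card_le_card (filter_subset_filter _ hF)
  unfold mmScoreH
  omega

theorem gameValue_mmScoreH_false_singleton_le (v : V) :
    gameValue (mmScoreH E) false {v} ∅ ≤ #(E.filter (v ∈ ·)) := by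
  have hdeleted : E \ E.filter (v ∉ ·) = E.filter (v ∈ ·) := by
    ext e
    simp only [mem_sdiff, mem_filter]
    tauto
  have hrest : gameValue (mmScoreH (E.filter (v ∉ ·))) false {v} ∅ ≤ 0 :=
    gameValue_false_singleton_nonpos _ (mmScoreH_swap _) (mmScoreH_le_insert _)
      (mmScoreH_insert_left_eq_insert_right _ fun e he => (mem_filter.mp he).2)
  have hdel := gameValue_le_gameValue_add
    (mmScoreH_le_add_card_sdiff E (filter_subset (v ∉ ·) E)) false {v} ∅
  rw [hdeleted] at hdel
  linarith

end MakerMaker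

/-- For the Maker-Maker scoring positional game on a finite hypergraph,
`0 ≤ Ls(H) ≤ Δ(H)` and `Rs(H) = -Ls(H)`. -/
theorem makerMaker_scoring_game_bounds {V : Type} [Fintype V] [DecidableEq V]
    (E : Finset (Finset V)) :
    0 ≤ gameValue (mmScoreH E) true ∅ ∅ ∧
    gameValue (mmScoreH E) true ∅ ∅ ≤
      ((Finset.univ.sup (fun v : V => (E.filter (fun e => v ∈ e)).card) : ℕ) : ℤ) ∧
    gameValue (mmScoreH E) false ∅ ∅ = - gameValue (mmScoreH E) true ∅ ∅ := by
  have hswap : gameValue (mmScoreH E) false ∅ ∅ = -gameValue (mmScoreH E) true ∅ ∅ :=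
    gameValue_swap _ (mmScoreH_swap E) false ∅ ∅
  have hturn := gameValue_false_le_true _ (mmScoreH_le_insert E) ∅ ∅
  refine ⟨by linarith, ?_, hswap⟩
  rcases (∅ ∪ ∅ : Finset V)ᶜ.eq_empty_or_nonempty with h | h
  · rw [gameValue_of_compl_eq_empty _ h, mmScoreH, sub_self]
    positivity
  · refine (gameValue_true_le_iff _ h).mpr fun v _ => ?_
    calc gameValue (mmScoreH E) false (insert v ∅) ∅
        ≤ #(E.filter (v ∈ ·)) :=
          insert_empty (a := v) ▸ gameValue_mmScoreH_false_singleton_le E v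
      _ ≤ _ := by exact_mod_cast le_sup (f := fun v => #(E.filter (v ∈ ·))) (mem_univ v)
end

section
/- In the Maker-Breaker scoring positional game on a finite hypergraph H = (V,E) with |V| = n, we have Ls(H) ≥ Σ_{e∈E} 2^{−|e|} − n·ℓ(H)/8 and Rs(H) ≤ Σ_{e∈E} 2^{−|e|}, where ℓ(H) is the maximum number of hyperedges containing any fixed pair of distinct vertices. -/
/-!
Erdős–Selfridge potential argument. Give every edge not yet touched by Breaker the value `2^{-k}`,
where `k` is the number of its vertices Maker still lacks. The potential, the sum of these values,
is the expected final score under random play from the current position, and it equals the score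
once the board is full. Claiming a vertex `x` moves the potential by the weight of `x` (the value
of the live edges through `x`): up for Maker, down for Breaker. Breaker, always claiming a vertex
of maximal weight, never lets a round raise the potential. Maker, doing the same, loses in a round
only what Breaker's reply `v` gained from Maker's move `u`: at most `1/4` per edge through both
`u` and `v`, hence at most `ℓ/4` per round.
-/

section GameValue

variable {V : Type} [Fintype V] [DecidableEq V] (score : Finset V → Finset V → ℤ)
  {A B : Finset V}

theorem gameValue_of_compl_eq_empty_s9 (turn : Bool) (h : (A ∪ B)ᶜ = ∅) :
    gameValue score turn A B = score A B := by
  rw [gameValue, dif_pos h]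

theorem gameValue_true_of_compl_ne_empty (h : (A ∪ B)ᶜ ≠ ∅) :
    gameValue score true A B = ((A ∪ B)ᶜ).attach.sup'
      (Finset.attach_nonempty_iff.mpr (Finset.nonempty_iff_ne_empty.mpr h))
      (fun u => gameValue score false (insert u.1 A) B) := by
  rw [gameValue, dif_neg h]
  rfl

theorem gameValue_false_of_compl_ne_empty (h : (A ∪ B)ᶜ ≠ ∅) :
    gameValue score false A B = ((A ∪ B)ᶜ).attach.inf'
      (Finset.attach_nonempty_iff.mpr (Finset.nonempty_iff_ne_empty.mpr h))
      (fun v => gameValue score true A (insert v.1 B)) := by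
  rw [gameValue, dif_neg h]
  rfl

theorem gameValue_false_insert_le_gameValue_true {u : V} (hu : u ∈ (A ∪ B)ᶜ) :
    gameValue score false (insert u A) B ≤ gameValue score true A B := by
  rw [gameValue_true_of_compl_ne_empty score (Finset.ne_empty_of_mem hu)]
  exact Finset.le_sup' (fun u : {x // x ∈ (A ∪ B)ᶜ} => gameValue score false (insert u.1 A) B)
    (Finset.mem_attach _ ⟨u, hu⟩)

theorem gameValue_false_le_gameValue_true_insert {v : V} (hv : v ∈ (A ∪ B)ᶜ) :
    gameValue score false A B ≤ gameValue score true A (insert v B) := by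
  rw [gameValue_false_of_compl_ne_empty score (Finset.ne_empty_of_mem hv)]
  exact Finset.inf'_le (fun v : {x // x ∈ (A ∪ B)ᶜ} => gameValue score true A (insert v.1 B))
    (Finset.mem_attach _ ⟨v, hv⟩)

theorem exists_gameValue_true_eq (h : (A ∪ B)ᶜ ≠ ∅) :
    ∃ u ∈ (A ∪ B)ᶜ, gameValue score true A B = gameValue score false (insert u A) B := by
  rw [gameValue_true_of_compl_ne_empty score h]
  obtain ⟨u, -, hu⟩ := Finset.exists_mem_eq_sup' _
    (fun u : {x // x ∈ (A ∪ B)ᶜ} => gameValue score false (insert u.1 A) B)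
  exact ⟨u, u.2, hu⟩

theorem exists_gameValue_false_eq (h : (A ∪ B)ᶜ ≠ ∅) :
    ∃ v ∈ (A ∪ B)ᶜ, gameValue score false A B = gameValue score true A (insert v B) := by
  rw [gameValue_false_of_compl_ne_empty score h]
  obtain ⟨v, -, hv⟩ := Finset.exists_mem_eq_inf' _
    (fun v : {x // x ∈ (A ∪ B)ᶜ} => gameValue score true A (insert v.1 B))
  exact ⟨v, v.2, hv⟩

end GameValue

namespace Finset

variable {V : Type*} [Fintype V] [DecidableEq V] {A B : Finset V}

theorem card_compl_insert_union_add_one {u : V} (hu : u ∈ (A ∪ B)ᶜ) :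
    ((insert u A ∪ B)ᶜ).card + 1 = ((A ∪ B)ᶜ).card := by
  rw [insert_union, compl_insert, card_erase_add_one hu]

theorem card_compl_union_insert_add_one {v : V} (hv : v ∈ (A ∪ B)ᶜ) :
    ((A ∪ insert v B)ᶜ).card + 1 = ((A ∪ B)ᶜ).card := by
  rw [union_insert, compl_insert, card_erase_add_one hv]

theorem disjoint_insert_left_of_mem_compl {u : V} (hAB : Disjoint A B) (hu : u ∈ (A ∪ B)ᶜ) :
    Disjoint (insert u A) B :=
  disjoint_insert_left.mpr ⟨fun h => mem_compl.mp hu (mem_union_right A h), hAB⟩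

theorem disjoint_insert_right_of_mem_compl {v : V} (hAB : Disjoint A B) (hv : v ∈ (A ∪ B)ᶜ) :
    Disjoint A (insert v B) :=
  disjoint_insert_right.mpr ⟨fun h => mem_compl.mp hv (mem_union_left B h), hAB⟩

end Finset

section Strategy

variable {V : Type} [Fintype V] [DecidableEq V] {A B : Finset V}
variable (score : Finset V → Finset V → ℤ) (Φ : Finset V → Finset V → ℚ)

theorem le_gameValue_true_of_round
    (terminal : ∀ A B, Disjoint A B → (A ∪ B)ᶜ = ∅ → Φ A B ≤ score A B)
    (round : ∀ A B, Disjoint A B → (A ∪ B)ᶜ ≠ ∅ → ∃ u ∈ (A ∪ B)ᶜ, Φ A B ≤ Φ (insert u A) B ∧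
      ∀ v ∈ (insert u A ∪ B)ᶜ, Φ A B ≤ Φ (insert u A) (insert v B))
    (A B : Finset V) (hAB : Disjoint A B) : Φ A B ≤ gameValue score true A B := by
  by_cases hfull : (A ∪ B)ᶜ = ∅
  · rw [gameValue_of_compl_eq_empty_s9 score true hfull]
    exact terminal A B hAB hfull
  obtain ⟨u, hu, hΦu, hΦuv⟩ := round A B hAB hfull
  have huB := Finset.disjoint_insert_left_of_mem_compl hAB hu
  refine le_trans ?_ (Int.cast_le.mpr (gameValue_false_insert_le_gameValue_true score hu))
  by_cases hfull' : (insert u A ∪ B)ᶜ = ∅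
  · rw [gameValue_of_compl_eq_empty_s9 score false hfull']
    exact hΦu.trans (terminal _ _ huB hfull')
  obtain ⟨v, hv, hreply⟩ := exists_gameValue_false_eq score hfull'
  rw [hreply]
  exact (hΦuv v hv).trans (le_gameValue_true_of_round terminal round _ _
    (Finset.disjoint_insert_right_of_mem_compl huB hv))
termination_by ((A ∪ B)ᶜ).card
decreasing_by
  have := Finset.card_compl_insert_union_add_one hu
  have := Finset.card_compl_union_insert_add_one hv
  omega

theorem gameValue_false_le_of_round
    (terminal : ∀ A B, Disjoint A B → (A ∪ B)ᶜ = ∅ → score A B ≤ Φ A B)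
    (round : ∀ A B, Disjoint A B → (A ∪ B)ᶜ ≠ ∅ → ∃ v ∈ (A ∪ B)ᶜ, Φ A (insert v B) ≤ Φ A B ∧
      ∀ u ∈ (A ∪ insert v B)ᶜ, Φ (insert u A) (insert v B) ≤ Φ A B)
    (A B : Finset V) (hAB : Disjoint A B) : gameValue score false A B ≤ Φ A B := by
  by_cases hfull : (A ∪ B)ᶜ = ∅
  · rw [gameValue_of_compl_eq_empty_s9 score false hfull]
    exact terminal A B hAB hfull
  obtain ⟨v, hv, hΦv, hΦvu⟩ := round A B hAB hfull
  have hAv := Finset.disjoint_insert_right_of_mem_compl hAB hv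
  refine le_trans (Int.cast_le.mpr (gameValue_false_le_gameValue_true_insert score hv)) ?_
  by_cases hfull' : (A ∪ insert v B)ᶜ = ∅
  · rw [gameValue_of_compl_eq_empty_s9 score true hfull']
    exact (terminal _ _ hAv hfull').trans hΦv
  obtain ⟨u, hu, hreply⟩ := exists_gameValue_true_eq score hfull'
  rw [hreply]
  exact (gameValue_false_le_of_round terminal round _ _
    (Finset.disjoint_insert_left_of_mem_compl hAv hu)).trans (hΦvu u hu)
termination_by ((A ∪ B)ᶜ).card
decreasing_by
  have := Finset.card_compl_union_insert_add_one hv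
  have := Finset.card_compl_insert_union_add_one hu
  omega

end Strategy

namespace MakerBreaker

open Finset

section Potential

variable {V : Type*} [DecidableEq V]

def edgeValue (A B e : Finset V) : ℚ :=
  if Disjoint e B then 2⁻¹ ^ #(e \ A) else 0

def potential (E : Finset (Finset V)) (A B : Finset V) : ℚ :=
  ∑ e ∈ E, edgeValue A B e

def weight (E : Finset (Finset V)) (A B : Finset V) (x : V) : ℚ :=
  potential (E.filter (x ∈ ·)) A B

def codegree (E : Finset (Finset V)) (x y : V) : ℕ :=
  #(E.filter fun e => x ∈ e ∧ y ∈ e)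

section EdgeValue

variable {A B e : Finset V}

theorem edgeValue_nonneg : 0 ≤ edgeValue A B e := by
  unfold edgeValue
  split_ifs <;> positivity

theorem edgeValue_insert_right (v : V) :
    edgeValue A (insert v B) e = if v ∈ e then 0 else edgeValue A B e := by
  by_cases hv : v ∈ e <;> simp [edgeValue, disjoint_insert_right, hv]

theorem edgeValue_insert_left {u : V} (hu : u ∉ A) :
    edgeValue (insert u A) B e = if u ∈ e then 2 * edgeValue A B e else edgeValue A B e := by
  by_cases hue : u ∈ e
  · have hcard := card_erase_add_one (mem_sdiff.mpr ⟨hue, hu⟩)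
    rw [← sdiff_insert] at hcard
    simp only [edgeValue, hue, if_true, ← hcard, pow_succ]
    split_ifs <;> ring
  · simp [edgeValue, hue, sdiff_insert_of_notMem hue]

theorem edgeValue_anti_right {B' : Finset V} (h : B ⊆ B') :
    edgeValue A B' e ≤ edgeValue A B e := by
  unfold edgeValue
  split_ifs with hB' hB
  · rfl
  · exact absurd (hB'.mono_right h) hB
  · positivity
  · rfl

theorem edgeValue_le_quarter {u v : V} (huv : u ≠ v) (hu : u ∈ e \ A) (hv : v ∈ e \ A) :
    edgeValue A B e ≤ 4⁻¹ := by
  have htwo : 2 ≤ #(e \ A) := one_lt_card.mpr ⟨u, hu, v, hv, huv⟩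
  unfold edgeValue
  split_ifs
  · calc (2⁻¹ : ℚ) ^ #(e \ A)
        _ ≤ 2⁻¹ ^ 2 := pow_le_pow_of_le_one (by norm_num) (by norm_num) htwo
        _ = 4⁻¹ := by norm_num
  · norm_num

theorem edgeValue_of_compl_eq_empty [Fintype V] (hAB : Disjoint A B) (hfull : (A ∪ B)ᶜ = ∅) :
    edgeValue A B e = if e ⊆ A then 1 else 0 := by
  have hcover (x : V) : x ∈ A ∨ x ∈ B := by
    rw [← mem_union, (compl_eq_empty_iff _).mp hfull]
    exact mem_univ x
  have hlive : Disjoint e B ↔ e ⊆ A :=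
    ⟨fun h x hx => (hcover x).resolve_right (disjoint_left.mp h hx),
      fun h => hAB.mono_left h⟩
  simp only [edgeValue, hlive]
  split_ifs with h
  · simp [sdiff_eq_empty_iff_subset.mpr h]
  · rfl

end EdgeValue

variable (E : Finset (Finset V)) {A B : Finset V}

theorem weight_nonneg (x : V) : 0 ≤ weight E A B x :=
  sum_nonneg fun _ _ => edgeValue_nonneg

theorem weight_anti_right {B' : Finset V} (h : B ⊆ B') (x : V) :
    weight E A B' x ≤ weight E A B x :=
  sum_le_sum fun _ _ => edgeValue_anti_right h

theorem potential_insert_right (v : V) :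
    potential E A (insert v B) = potential E A B - weight E A B v := by
  simp only [weight, potential, sum_filter, ← sum_sub_distrib, edgeValue_insert_right]
  refine sum_congr rfl fun e _ => ?_
  split_ifs <;> ring

theorem potential_insert_left {u : V} (hu : u ∉ A) :
    potential E (insert u A) B = potential E A B + weight E A B u := by
  simp only [weight, potential, sum_filter, ← sum_add_distrib, edgeValue_insert_left hu]
  refine sum_congr rfl fun e _ => ?_
  split_ifs <;> ring

theorem weight_insert_left_le {u v : V} (hu : u ∉ A) (hv : v ∉ A) (huv : u ≠ v) :
    weight E (insert u A) B v ≤ weight E A B v + codegree E v u / 4 := by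
  have hpairs : weight (E.filter (v ∈ ·)) A B u ≤ codegree E v u * 4⁻¹ := by
    rw [codegree, ← filter_filter, ← nsmul_eq_mul]
    refine sum_le_card_nsmul _ _ _ fun e he => ?_
    simp only [mem_filter] at he
    exact edgeValue_le_quarter huv (mem_sdiff.mpr ⟨he.2, hu⟩) (mem_sdiff.mpr ⟨he.1.2, hv⟩)
  change potential _ (insert u A) B ≤ potential _ A B + _
  rw [potential_insert_left _ hu]
  linarith

theorem potential_empty :
    potential E ∅ ∅ = ∑ e ∈ E, (2 : ℚ) ^ (-(#e : ℤ)) := by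
  simp [potential, edgeValue]

end Potential

variable {V : Type} [Fintype V] [DecidableEq V] (E : Finset (Finset V))

theorem potential_eq_mbScoreH {A B : Finset V} (hAB : Disjoint A B) (hfull : (A ∪ B)ᶜ = ∅) :
    potential E A B = mbScoreH E A B := by
  simp [potential, mbScoreH, edgeValue_of_compl_eq_empty hAB hfull]

theorem gameValue_false_le_potential (A B : Finset V) (hAB : Disjoint A B) :
    gameValue (mbScoreH E) false A B ≤ potential E A B := by
  refine gameValue_false_le_of_round _ _
    (fun A B hAB hfull => (potential_eq_mbScoreH E hAB hfull).ge)
    (fun A B _ hfree => ?_) A B hAB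
  obtain ⟨v, hv, hmax⟩ := (A ∪ B)ᶜ.exists_max_image (weight E A B)
    (nonempty_iff_ne_empty.mpr hfree)
  refine ⟨v, hv, ?_, fun u hu => ?_⟩
  · rw [potential_insert_right]
    linarith [weight_nonneg E (A := A) (B := B) v]
  · simp only [mem_compl, mem_union, mem_insert, not_or] at hu
    obtain ⟨huA, -, huB⟩ := hu
    rw [potential_insert_left _ huA, potential_insert_right]
    linarith [weight_anti_right E (A := A) (subset_insert v B) u,
      hmax u (by simp [huA, huB])]

/-- Each round costs Maker at most `ℓ / 4` and uses up two unclaimed vertices. -/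
theorem potential_sub_le_gameValue_true {ℓ : ℕ}
    (hℓ : ∀ x y : V, x ≠ y → codegree E x y ≤ ℓ) (A B : Finset V) (hAB : Disjoint A B) :
    potential E A B - ((A ∪ B)ᶜ).card * ℓ / 8 ≤ gameValue (mbScoreH E) true A B := by
  refine le_gameValue_true_of_round _ (fun A B => potential E A B - ((A ∪ B)ᶜ).card * ℓ / 8)
    (fun A B hAB hfull => ?_) (fun A B _ hfree => ?_) A B hAB
  · simp [hfull, potential_eq_mbScoreH E hAB hfull]
  obtain ⟨u, hu, hmax⟩ := (A ∪ B)ᶜ.exists_max_image (weight E A B)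
    (nonempty_iff_ne_empty.mpr hfree)
  have huA : u ∉ A := fun h => mem_compl.mp hu (mem_union_left B h)
  have hcard_u := card_compl_insert_union_add_one hu
  refine ⟨u, hu, ?_, fun v hv => ?_⟩
  · rw [potential_insert_left _ huA, ← hcard_u]
    push_cast
    linarith [weight_nonneg E (A := A) (B := B) u, (Nat.cast_nonneg ℓ : (0 : ℚ) ≤ ℓ)]
  · have hcard_v := card_compl_union_insert_add_one hv
    simp only [mem_compl, mem_union, mem_insert, not_or] at hv
    obtain ⟨⟨hvu, hvA⟩, hvB⟩ := hv
    rw [potential_insert_right, potential_insert_left _ huA, ← hcard_u, ← hcard_v]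
    push_cast
    have hℓvu : (codegree E v u : ℚ) ≤ ℓ := by exact_mod_cast hℓ v u hvu
    linarith [weight_insert_left_le E (B := B) huA hvA (Ne.symm hvu),
      hmax v (by simp [hvA, hvB])]

end MakerBreaker

/-- Erdős–Selfridge-type bounds for Maker-Breaker scoring positional
games: `Ls(H) ≥ Σ_e 2^{-|e|} - n·ℓ(H)/8` and `Rs(H) ≤ Σ_e 2^{-|e|}`. -/
theorem makerBreaker_scoring_potential_bounds {V : Type} [Fintype V] [DecidableEq V]
    (E : Finset (Finset V)) :
    (∑ e ∈ E, (2 : ℚ) ^ (-(e.card : ℤ))) -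
        (Fintype.card V : ℚ) *
          (((Finset.univ.filter (fun p : V × V => p.1 ≠ p.2)).sup
            (fun p => (E.filter (fun e => p.1 ∈ e ∧ p.2 ∈ e)).card) : ℕ) : ℚ) / 8 ≤
      (gameValue (mbScoreH E) true ∅ ∅ : ℚ) ∧
    (gameValue (mbScoreH E) false ∅ ∅ : ℚ) ≤ ∑ e ∈ E, (2 : ℚ) ^ (-(e.card : ℤ)) := by
  have hcodegree (x y : V) (hxy : x ≠ y) : MakerBreaker.codegree E x y ≤
      (Finset.univ.filter (fun p : V × V => p.1 ≠ p.2)).sup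
        (fun p => (E.filter (fun e => p.1 ∈ e ∧ p.2 ∈ e)).card) :=
    Finset.le_sup (f := fun p : V × V => (E.filter (fun e => p.1 ∈ e ∧ p.2 ∈ e)).card)
      (Finset.mem_filter.mpr ⟨Finset.mem_univ (x, y), hxy⟩)
  have hstart : ((∅ ∪ ∅ : Finset V)ᶜ).card = Fintype.card V := by simp
  have hmaker :=
    MakerBreaker.potential_sub_le_gameValue_true E hcodegree ∅ ∅ (Finset.disjoint_empty_left ∅)
  have hbreaker :=
    MakerBreaker.gameValue_false_le_potential E ∅ ∅ (Finset.disjoint_empty_left ∅)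
  rw [hstart, MakerBreaker.potential_empty] at hmaker
  rw [MakerBreaker.potential_empty] at hbreaker
  exact ⟨hmaker, hbreaker⟩
end
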